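/- Let m₁, m₂, m₃, m₄ be positive integers and let Q be the 4×4 integer matrix [[0,1,0,1],[1,0,1,0],[0,1,0,1],[1,0,1,0]]. There exist a 4×3 integer matrix R′ whose rows 1,2,3,4 are permutations of the triples (m₁,m₂,m₄), (m₁,m₂,m₃), (m₂,m₃,m₄), (m₁,m₃,m₄) respectively, and a 4×3 integer matrix X with Q·X = R′, if and only if m₁ = m₃ and m₂ = m₄. -/
import Mathlib


/-- Let `m₁, m₂, m₃, m₄` be positive integers and `Q` the augmented intersection
matrix `[[0,1,0,1],[1,0,1,0],[0,1,0,1],[1,0,1,0]]` of `𝔽₀ = ℂP¹ × ℂP¹`.  There exist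
a `4 × 3` integer matrix `R'` whose rows are permutations of the triples
`(m₁,m₂,m₄)`, `(m₁,m₂,m₃)`, `(m₂,m₃,m₄)`, `(m₁,m₃,m₄)` respectively, and a `4 × 3`
integer matrix `X` with `Q * X = R'`, if and only if `m₁ = m₃` and `m₂ = m₄`. -/
theorem stmt_13 (m₁ m₂ m₃ m₄ : ℤ)
    (h₁ : 0 < m₁) (h₂ : 0 < m₂) (h₃ : 0 < m₃) (h₄ : 0 < m₄)
    (Q : Matrix (Fin 4) (Fin 4) ℤ)
    (hQ : Q = !![0, 1, 0, 1; 1, 0, 1, 0; 0, 1, 0, 1; 1, 0, 1, 0]) :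
    (∃ (R' X : Matrix (Fin 4) (Fin 3) ℤ),
      (∃ σ : Equiv.Perm (Fin 3), ∀ k, R' 0 k = ![m₁, m₂, m₄] (σ k)) ∧
      (∃ σ : Equiv.Perm (Fin 3), ∀ k, R' 1 k = ![m₁, m₂, m₃] (σ k)) ∧
      (∃ σ : Equiv.Perm (Fin 3), ∀ k, R' 2 k = ![m₂, m₃, m₄] (σ k)) ∧
      (∃ σ : Equiv.Perm (Fin 3), ∀ k, R' 3 k = ![m₁, m₃, m₄] (σ k)) ∧
      Q * X = R') ↔ (m₁ = m₃ ∧ m₂ = m₄) := by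
  subst hQ
  constructor
  · rintro ⟨R', X, ⟨σ0, h0⟩, ⟨σ1, hr1⟩, ⟨σ2, hr2⟩, ⟨σ3, hr3⟩, hQX⟩
    have hrow02 : ∀ k, R' 0 k = R' 2 k := by
      intro k
      rw [← hQX]
      simp [Matrix.mul_apply, Fin.sum_univ_four, Matrix.vecHead, Matrix.vecTail]
    have hrow13 : ∀ k, R' 1 k = R' 3 k := by
      intro k
      rw [← hQX]
      simp [Matrix.mul_apply, Fin.sum_univ_four, Matrix.vecHead, Matrix.vecTail]
    have e0 : ∑ k, R' 0 k = m₁ + m₂ + m₄ := by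
      rw [Finset.sum_congr rfl (fun k _ => h0 k), Equiv.sum_comp σ0 (![m₁, m₂, m₄])]
      simp [Fin.sum_univ_three]
    have e1 : ∑ k, R' 1 k = m₁ + m₂ + m₃ := by
      rw [Finset.sum_congr rfl (fun k _ => hr1 k), Equiv.sum_comp σ1 (![m₁, m₂, m₃])]
      simp [Fin.sum_univ_three]
    have e2 : ∑ k, R' 2 k = m₂ + m₃ + m₄ := by
      rw [Finset.sum_congr rfl (fun k _ => hr2 k), Equiv.sum_comp σ2 (![m₂, m₃, m₄])]
      simp [Fin.sum_univ_three]
    have e3 : ∑ k, R' 3 k = m₁ + m₃ + m₄ := by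
      rw [Finset.sum_congr rfl (fun k _ => hr3 k), Equiv.sum_comp σ3 (![m₁, m₃, m₄])]
      simp [Fin.sum_univ_three]
    have s02 : ∑ k, R' 0 k = ∑ k, R' 2 k :=
      Finset.sum_congr rfl (fun k _ => hrow02 k)
    have s13 : ∑ k, R' 1 k = ∑ k, R' 3 k :=
      Finset.sum_congr rfl (fun k _ => hrow13 k)
    rw [e0, e2] at s02
    rw [e1, e3] at s13
    constructor <;> linarith
  · rintro ⟨rfl, rfl⟩
    refine ⟨!![m₁, m₂, m₂; m₁, m₂, m₁; m₁, m₂, m₂; m₁, m₂, m₁],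
      !![m₁, m₂, m₁; m₁, m₂, m₂; 0, 0, 0; 0, 0, 0],
      ⟨Equiv.refl _, ?_⟩, ⟨Equiv.refl _, ?_⟩,
      ⟨Equiv.swap 0 1, ?_⟩, ⟨Equiv.swap 1 2, ?_⟩, ?_⟩
    · intro k; fin_cases k <;> rfl
    · intro k; fin_cases k <;> rfl
    · intro k; fin_cases k <;> simp [Equiv.swap_apply_def, Matrix.vecHead, Matrix.vecTail]
    · intro k; fin_cases k <;> simp [Equiv.swap_apply_def, Matrix.vecHead, Matrix.vecTail]
    · ext i j
      fin_cases i <;> fin_cases j <;>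
        simp [Matrix.mul_apply, Fin.sum_univ_four, Matrix.vecHead, Matrix.vecTail]
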